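/- arXiv:1910.02287 — 2 statements merged into one kernel-verified Lean document; each statement's English description precedes it below -/
import Mathlib

section
/- Suppose r = R and that there exist two distinct points x_0, x_1 ∈ Ω̂ with dist(x_0, ∂Ω̂) = dist(x_1, ∂Ω̂) = R. Then inf { (∬_H J(x − y)|u(y) − u(x)|^2 dy dx) / (∫_{Γ_R} |u(x)|^2 dx) : u ∈ L^2(Ω_R ∪ Γ_R), ∫_{Γ_R} u = 0, ∫_{Γ_R} |u|^2 > 0 } = 0. -/
/-!
Take `u = 1` on one small ball and `u = -1` on a disjoint ball of the same radius, both inside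
`Γ_R` within distance `η` of `∂Ω̂`. Then `u` has mean zero on `Γ_R`, and the only pairs in `H`
where `u(y) ≠ u(x)` join the balls to `Ω_R`. Such points are more than `R - η` apart, so
`J(x - y)` is as small as we like by continuity of `J` and `J = 0` on the sphere of radius `R`;
the energy is then at most a small multiple of `∫_{Γ_R} u²`.
-/

open MeasureTheory Set Metric
open scoped ENNReal

noncomputable section

theorem exists_pos_lt_of_sub_lt_norm {E : Type*} [NormedAddCommGroup E] [NormedSpace ℝ E]
    [Nontrivial E] {J : E → ℝ} {R ε : ℝ} (hJ : Continuous J)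
    (hdecr : ∀ x y, ‖x‖ ≤ ‖y‖ → J y ≤ J x) (hzero : ∀ x, R ≤ ‖x‖ → J x = 0) (hε : 0 < ε) :
    ∃ η > 0, ∀ w, R - η < ‖w‖ → J w < ε := by
  obtain ⟨e, he⟩ := exists_norm_eq E zero_le_one
  have hcont : Continuous fun t : ℝ => J (t • e) := hJ.comp (continuous_id.smul continuous_const)
  have hJR : J (R • e) = 0 := hzero _ (by simp [norm_smul, he, le_abs_self])
  obtain ⟨η, hη, hnear⟩ := continuousAt_iff.mp hcont.continuousAt ε hε
  refine ⟨η, hη, fun w hw => ?_⟩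
  rcases le_or_gt R ‖w‖ with hRw | hwR
  · rw [hzero w hRw]
    exact hε
  · have hJw : dist (J (‖w‖ • e)) (J (R • e)) < ε :=
      hnear (by rw [Real.dist_eq, abs_lt]; constructor <;> linarith)
    rw [hJR, Real.dist_eq, sub_zero] at hJw
    calc J w ≤ J (‖w‖ • e) := hdecr _ _ (by simp [norm_smul, he])
      _ < ε := (le_abs_self _).trans_lt hJw

theorem exists_disjoint_balls_subset {E : Type*} [NormedAddCommGroup E] [NormedSpace ℝ E]
    [Nontrivial E] {V : Set E} (hV : IsOpen V) (hne : V.Nonempty) :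
    ∃ p q : E, ∃ ρ > 0, Disjoint (ball p ρ) (ball q ρ) ∧ ball p ρ ∪ ball q ρ ⊆ V := by
  obtain ⟨p, hp⟩ := hne
  obtain ⟨ρ, hρ, hball⟩ := isOpen_iff.mp hV p hp
  obtain ⟨e, he⟩ := exists_norm_eq E (by positivity : 0 ≤ ρ / 2)
  have hdist : dist p (p + e) = ρ / 2 := by simp [he]
  refine ⟨p, p + e, ρ / 4, by positivity, ball_disjoint_ball (by linarith),
    union_subset ((ball_subset_ball (by linarith)).trans hball) fun x hx => hball ?_⟩
  rw [mem_ball] at hx ⊢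
  linarith [dist_triangle x (p + e) p, dist_comm p (p + e)]

theorem nonempty_inter_infDist_frontier_lt {α : Type*} [PseudoMetricSpace α] {s : Set α} {η : ℝ}
    (hs : (frontier s).Nonempty) (hη : 0 < η) :
    (s ∩ {x | infDist x (frontier s) < η}).Nonempty := by
  obtain ⟨q, hq⟩ := hs
  obtain ⟨p, hp, hpq⟩ := mem_closure_iff.mp (frontier_subset_closure hq) η hη
  exact ⟨p, hp, (infDist_le_dist_of_mem hq).trans_lt (by rwa [dist_comm])⟩

theorem nonempty_of_infDist_ne_zero {α : Type*} [PseudoMetricSpace α] {s : Set α} {x : α}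
    (h : infDist x s ≠ 0) : s.Nonempty :=
  nonempty_iff_ne_empty.2 fun hs => h (hs ▸ infDist_empty)

def collar {α : Type*} [PseudoMetricSpace α] (s : Set α) (r : ℝ) : Set α :=
  {x ∈ s | infDist x (frontier s) ≤ r}

theorem measurableSet_collar {α : Type*} [PseudoMetricSpace α] [MeasurableSpace α]
    [OpensMeasurableSpace α] {s : Set α} (hs : MeasurableSet s) (r : ℝ) :
    MeasurableSet (collar s r) :=
  hs.inter (measurableSet_le (continuous_infDist_pt _).measurable measurable_const)

theorem le_of_mem_diff_collar_of_infDist_lt {E : Type*} [SeminormedAddCommGroup E] {J : E → ℝ}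
    {s : Set E} {x y : E} {r η κ : ℝ} (hJ : ∀ w, r - η < ‖w‖ → J w < κ)
    (hx : x ∈ s \ collar s r) (hy : infDist y (frontier s) < η) :
    J (x - y) ≤ κ ∧ J (y - x) ≤ κ := by
  have hxr : r < infDist x (frontier s) := not_le.1 fun h => hx.2 ⟨hx.1, h⟩
  have hxy : r - η < ‖x - y‖ := by
    linarith [infDist_le_infDist_add_dist (s := frontier s) (x := x) (y := y), dist_eq_norm x y]
  exact ⟨(hJ _ hxy).le, (hJ _ (norm_sub_rev x y ▸ hxy)).le⟩

section SignedIndicator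

variable {α : Type*} {A B : Set α}

def signedIndicator (A B : Set α) : α → ℝ :=
  A.indicator 1 - B.indicator 1

theorem abs_signedIndicator_le_one (x : α) : |signedIndicator A B x| ≤ 1 := by
  by_cases hA : x ∈ A <;> by_cases hB : x ∈ B <;> simp [signedIndicator, hA, hB]

theorem signedIndicator_eq_zero_of_notMem {x : α} (hx : x ∉ A ∪ B) : signedIndicator A B x = 0 := by
  simp_all [signedIndicator]

theorem sq_signedIndicator (h : Disjoint A B) (x : α) :
    signedIndicator A B x ^ 2 = (A ∪ B).indicator 1 x := by
  by_cases hA : x ∈ A <;> by_cases hB : x ∈ B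
  · exact absurd hB (disjoint_left.mp h hA)
  all_goals simp [signedIndicator, hA, hB]

variable [MeasurableSpace α] {μ : Measure α} {Γ : Set α}

theorem memLp_signedIndicator (p : ℝ≥0∞) (hA : MeasurableSet A) (hB : MeasurableSet B)
    (hAfin : μ A ≠ ∞) (hBfin : μ B ≠ ∞) : MemLp (signedIndicator A B) p μ :=
  (memLp_indicator_const p hA 1 (Or.inr hAfin)).sub (memLp_indicator_const p hB 1 (Or.inr hBfin))

theorem setIntegral_signedIndicator (hA : MeasurableSet A) (hB : MeasurableSet B)
    (hAfin : μ A ≠ ∞) (hBfin : μ B ≠ ∞) (hAΓ : A ⊆ Γ) (hBΓ : B ⊆ Γ) :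
    ∫ x in Γ, signedIndicator A B x ∂μ = μ.real A - μ.real B := by
  have hA' : Integrable (A.indicator (1 : α → ℝ)) μ :=
    (integrable_indicator_iff hA).2 (integrableOn_const hAfin)
  have hB' : Integrable (B.indicator (1 : α → ℝ)) μ :=
    (integrable_indicator_iff hB).2 (integrableOn_const hBfin)
  rw [signedIndicator, Pi.sub_def, integral_sub hA'.integrableOn hB'.integrableOn,
    integral_indicator_one hA, integral_indicator_one hB, measureReal_restrict_apply hA,
    measureReal_restrict_apply hB, inter_eq_left.2 hAΓ, inter_eq_left.2 hBΓ]

theorem setIntegral_sq_signedIndicator (h : Disjoint A B) (hA : MeasurableSet A)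
    (hB : MeasurableSet B) (hABΓ : A ∪ B ⊆ Γ) :
    ∫ x in Γ, signedIndicator A B x ^ 2 ∂μ = μ.real (A ∪ B) := by
  simp_rw [sq_signedIndicator h]
  rw [integral_indicator_one (hA.union hB), measureReal_restrict_apply (hA.union hB),
    inter_eq_left.2 hABΓ]

theorem setIntegral_signedIndicator_ball_eq_zero {E : Type*} [NormedAddCommGroup E]
    [NormedSpace ℝ E] [FiniteDimensional ℝ E] [MeasurableSpace E] [BorelSpace E]
    (μ : Measure E) [μ.IsAddHaarMeasure] {p q : E} {ρ : ℝ} {Γ : Set E}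
    (hp : ball p ρ ⊆ Γ) (hq : ball q ρ ⊆ Γ) :
    ∫ x in Γ, signedIndicator (ball p ρ) (ball q ρ) x ∂μ = 0 := by
  rw [setIntegral_signedIndicator measurableSet_ball measurableSet_ball measure_ball_lt_top.ne
    measure_ball_lt_top.ne hp hq, measureReal_def, measureReal_def,
    Measure.addHaar_ball_center μ p, Measure.addHaar_ball_center μ q, sub_self]

end SignedIndicator

section NonlocalEnergy

variable {α : Type*} {K : α → α → ℝ} {u : α → ℝ} {S Ω Γ : Set α} {κ : ℝ}

theorem kernel_mul_sq_sub_le_indicator (hκ : 0 ≤ κ)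
    (hKS : ∀ x ∈ Ω, ∀ y ∈ S, K x y ≤ κ ∧ K y x ≤ κ) (hu : ∀ x, |u x| ≤ 1)
    (hu0 : ∀ x ∉ S, u x = 0) (hSΓ : S ⊆ Γ) {z : α × α}
    (hz : z ∈ ((Ω ∪ Γ) ×ˢ (Ω ∪ Γ)) \ (Γ ×ˢ Γ)) :
    K z.1 z.2 * (u z.2 - u z.1) ^ 2 ≤ (S ×ˢ Ω ∪ Ω ×ˢ S).indicator (fun _ => 4 * κ) z := by
  obtain ⟨⟨hz1, hz2⟩, hzΓ⟩ := hz
  have hsq : (u z.2 - u z.1) ^ 2 ≤ 4 := by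
    nlinarith [abs_le.mp (hu z.1), abs_le.mp (hu z.2)]
  have hcross : K z.1 z.2 ≤ κ → K z.1 z.2 * (u z.2 - u z.1) ^ 2 ≤ 4 * κ := fun hK => by
    linarith [mul_le_mul hK hsq (sq_nonneg _) hκ]
  by_cases h1 : z.1 ∈ S <;> by_cases h2 : z.2 ∈ S
  · exact absurd ⟨hSΓ h1, hSΓ h2⟩ hzΓ
  · have hz2Ω : z.2 ∈ Ω := hz2.resolve_right fun h => hzΓ ⟨hSΓ h1, h⟩
    rw [indicator_of_mem (mem_union_left _ (mk_mem_prod h1 hz2Ω))]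
    exact hcross (hKS _ hz2Ω _ h1).2
  · have hz1Ω : z.1 ∈ Ω := hz1.resolve_right fun h => hzΓ ⟨h, hSΓ h2⟩
    rw [indicator_of_mem (mem_union_right _ (mk_mem_prod hz1Ω h2))]
    exact hcross (hKS _ hz1Ω _ h2).1
  · rw [hu0 _ h1, hu0 _ h2]
    simpa using indicator_nonneg (fun _ _ => by positivity) z

variable [MeasurableSpace α] {μ : Measure α} [SFinite μ]

theorem setIntegral_kernel_mul_sq_sub_le (hK : ∀ x y, 0 ≤ K x y) (hκ : 0 ≤ κ)
    (hKS : ∀ x ∈ Ω, ∀ y ∈ S, K x y ≤ κ ∧ K y x ≤ κ) (hu : ∀ x, |u x| ≤ 1)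
    (hu0 : ∀ x ∉ S, u x = 0) (hSΓ : S ⊆ Γ) (hS : MeasurableSet S) (hΩ : MeasurableSet Ω)
    (hΓ : MeasurableSet Γ) (hSfin : μ S ≠ ∞) (hΩfin : μ Ω ≠ ∞) :
    ∫ z in ((Ω ∪ Γ) ×ˢ (Ω ∪ Γ)) \ (Γ ×ˢ Γ), K z.1 z.2 * (u z.2 - u z.1) ^ 2 ∂μ.prod μ ≤
      8 * κ * μ.real Ω * μ.real S := by
  set T := S ×ˢ Ω ∪ Ω ×ˢ S
  have hT : MeasurableSet T := (hS.prod hΩ).union (hΩ.prod hS)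
  have hTfin : μ.prod μ T ≠ ∞ := by
    refine ne_top_of_le_ne_top ?_ (measure_union_le _ _)
    simp [Measure.prod_prod, ENNReal.mul_ne_top, hSfin, hΩfin]
  have hH : MeasurableSet (((Ω ∪ Γ) ×ˢ (Ω ∪ Γ)) \ (Γ ×ˢ Γ)) :=
    ((hΩ.union hΓ).prod (hΩ.union hΓ)).diff (hΓ.prod hΓ)
  calc _ ≤ ∫ z in ((Ω ∪ Γ) ×ˢ (Ω ∪ Γ)) \ (Γ ×ˢ Γ), T.indicator (fun _ => 4 * κ) z ∂μ.prod μ :=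
        integral_mono_of_nonneg (ae_of_all _ fun z => mul_nonneg (hK _ _) (sq_nonneg _))
          ((integrable_indicator_iff hT).2 (integrableOn_const hTfin)).integrableOn
          (ae_restrict_of_forall_mem hH fun z hz =>
            kernel_mul_sq_sub_le_indicator hκ hKS hu hu0 hSΓ hz)
    _ = (μ.prod μ).real ((((Ω ∪ Γ) ×ˢ (Ω ∪ Γ)) \ (Γ ×ˢ Γ)) ∩ T) * (4 * κ) := by
        rw [setIntegral_indicator hT, setIntegral_const, smul_eq_mul]
    _ ≤ ((μ.prod μ).real (S ×ˢ Ω) + (μ.prod μ).real (Ω ×ˢ S)) * (4 * κ) := by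
        gcongr
        exact (measureReal_mono inter_subset_right hTfin).trans (measureReal_union_le _ _)
    _ = 8 * κ * μ.real Ω * μ.real S := by
        rw [measureReal_prod_prod, measureReal_prod_prod]
        ring

end NonlocalEnergy

theorem poincare_constant_zero_when_r_eq_R_general
    (n : ℕ) (hn : 1 ≤ n)
    (Ωhat : Set (EuclideanSpace ℝ (Fin n)))
    (hΩopen : IsOpen Ωhat)
    (hΩbdd : Bornology.IsBounded Ωhat)
    (R : ℝ) (hR : 0 < R)
    (J : EuclideanSpace ℝ (Fin n) → ℝ)
    (hJcont : Continuous J) (hJnonneg : ∀ x, 0 ≤ J x)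
    (hJdecr : ∀ x y, ‖x‖ ≤ ‖y‖ → J y ≤ J x)
    (hJzero : ∀ x, R ≤ ‖x‖ → J x = 0)
    (r : ℝ) (hrR : r = R)
    (Γ Ω : Set (EuclideanSpace ℝ (Fin n)))
    (hΓ : Γ = {x ∈ Ωhat | Metric.infDist x (frontier Ωhat) ≤ r})
    (hΩ : Ω = Ωhat \ Γ)
    (x0 : EuclideanSpace ℝ (Fin n))
    (hd0 : Metric.infDist x0 (frontier Ωhat) = R) :
    ∀ ε : ℝ, 0 < ε →
      ∃ u : EuclideanSpace ℝ (Fin n) → ℝ,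
        MemLp u 2 (volume.restrict (Ω ∪ Γ)) ∧
        (∫ x in Γ, u x) = 0 ∧
        0 < ∫ x in Γ, (u x) ^ 2 ∧
        ∫ z in ((Ω ∪ Γ) ×ˢ (Ω ∪ Γ)) \ (Γ ×ˢ Γ), J (z.1 - z.2) * (u z.2 - u z.1) ^ 2 <
          ε * ∫ x in Γ, (u x) ^ 2 := by
  intro ε hε
  have : Nonempty (Fin n) := ⟨⟨0, hn⟩⟩
  obtain rfl : Γ = collar Ωhat R := hrR ▸ hΓ
  have hF := nonempty_of_infDist_ne_zero (hd0 ▸ hR.ne')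
  have hΓm := measurableSet_collar hΩopen.measurableSet R
  have hΩfin : volume Ω ≠ ∞ := (hΩbdd.subset (hΩ ▸ sdiff_subset)).measure_lt_top.ne
  -- the energy will be at most `8 κ |Ω| |S|`, where `|S| = ∫_Γ u²` for the support `S` of `u`
  set κ := ε / (8 * volume.real Ω + 1)
  have hκ : 0 < κ := by positivity
  have hκΩ : 8 * κ * volume.real Ω < ε := by
    nlinarith [div_mul_cancel₀ ε (by positivity : 8 * volume.real Ω + 1 ≠ 0)]
  obtain ⟨η, hη, hJη⟩ := exists_pos_lt_of_sub_lt_norm hJcont hJdecr hJzero hκ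
  obtain ⟨p, q, ρ, hρ, hpq, hS⟩ := exists_disjoint_balls_subset
    (hΩopen.inter (isOpen_lt (continuous_infDist_pt _) continuous_const))
    (nonempty_inter_infDist_frontier_lt hF (lt_min hη hR))
  have hSΓ : ball p ρ ∪ ball q ρ ⊆ collar Ωhat R := fun y hy =>
    ⟨(hS hy).1, (hS hy).2.le.trans (min_le_right _ _)⟩
  have hKS : ∀ x ∈ Ω, ∀ y ∈ ball p ρ ∪ ball q ρ, J (x - y) ≤ κ ∧ J (y - x) ≤ κ :=
    fun _ hx _ hy =>
      le_of_mem_diff_collar_of_infDist_lt hJη (hΩ ▸ hx) ((hS hy).2.trans_le (min_le_left _ _))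
  have hSfin : volume (ball p ρ ∪ ball q ρ) ≠ ∞ :=
    (measure_union_lt_top measure_ball_lt_top measure_ball_lt_top).ne
  have hSpos : 0 < volume.real (ball p ρ ∪ ball q ρ) := ENNReal.toReal_pos
    ((measure_ball_pos volume p hρ).trans_le (measure_mono subset_union_left)).ne' hSfin
  refine ⟨_, (memLp_signedIndicator 2 measurableSet_ball measurableSet_ball
      measure_ball_lt_top.ne measure_ball_lt_top.ne).restrict _,
    setIntegral_signedIndicator_ball_eq_zero volume (subset_union_left.trans hSΓ)
      (subset_union_right.trans hSΓ), ?_⟩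
  rw [setIntegral_sq_signedIndicator hpq measurableSet_ball measurableSet_ball hSΓ]
  refine ⟨hSpos, (setIntegral_kernel_mul_sq_sub_le (fun _ _ => hJnonneg _) hκ.le hKS
    abs_signedIndicator_le_one (fun _ => signedIndicator_eq_zero_of_notMem) hSΓ
    (measurableSet_ball.union measurableSet_ball) (hΩ ▸ hΩopen.measurableSet.diff hΓm) hΓm
    hSfin hΩfin).trans_lt (mul_lt_mul_of_pos_right hκΩ hSpos)⟩

/-- if `r = R` and there are two distinct points of `Ω̂` at distance exactly `R`
from the boundary, then the Poincaré-type infimum vanishes. -/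
theorem poincare_constant_zero_when_r_eq_R
    (n : ℕ) (hn : 1 ≤ n)
    (Ωhat : Set (EuclideanSpace ℝ (Fin n)))
    (hΩopen : IsOpen Ωhat) (hΩconn : IsConnected Ωhat)
    (hΩbdd : Bornology.IsBounded Ωhat)
    (R : ℝ) (hR : 0 < R)
    (J : EuclideanSpace ℝ (Fin n) → ℝ)
    (hJcont : Continuous J) (hJnonneg : ∀ x, 0 ≤ J x)
    (hJradial : ∀ x y, ‖x‖ = ‖y‖ → J x = J y)
    (hJdecr : ∀ x y, ‖x‖ ≤ ‖y‖ → J y ≤ J x)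
    (hJpos : ∀ x, ‖x‖ < R → 0 < J x)
    (hJzero : ∀ x, R ≤ ‖x‖ → J x = 0)
    (hJint : ∫ w, J w = 1)
    (r : ℝ) (hr0 : 0 < r) (hrR : r = R)
    (Γ Ω : Set (EuclideanSpace ℝ (Fin n)))
    (hΓ : Γ = {x ∈ Ωhat | Metric.infDist x (frontier Ωhat) ≤ r})
    (hΩ : Ω = Ωhat \ Γ)
    (hΩint : (interior Ω).Nonempty)
    (x0 x1 : EuclideanSpace ℝ (Fin n)) (hx0 : x0 ∈ Ωhat) (hx1 : x1 ∈ Ωhat) (hx01 : x0 ≠ x1)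
    (hd0 : Metric.infDist x0 (frontier Ωhat) = R)
    (hd1 : Metric.infDist x1 (frontier Ωhat) = R) :
    ∀ ε : ℝ, 0 < ε →
      ∃ u : EuclideanSpace ℝ (Fin n) → ℝ,
        MemLp u 2 (volume.restrict (Ω ∪ Γ)) ∧
        (∫ x in Γ, u x) = 0 ∧
        0 < ∫ x in Γ, (u x) ^ 2 ∧
        ∫ z in ((Ω ∪ Γ) ×ˢ (Ω ∪ Γ)) \ (Γ ×ˢ Γ), J (z.1 - z.2) * (u z.2 - u z.1) ^ 2 <
          ε * ∫ x in Γ, (u x) ^ 2 :=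
  poincare_constant_zero_when_r_eq_R_general n hn Ωhat hΩopen hΩbdd R hR J hJcont hJnonneg hJdecr
    hJzero r hrR Γ Ω hΓ hΩ x0 hd0
end
end

section
/- For every 1 ≤ p < ∞ and every 0 < r ≤ R (no restriction on the width of Γ_r relative to the support of J), the constant β := inf { (1/2) ∫_{Ω_r ∪ Γ_r} ∫_{Ω_r ∪ Γ_r} J(x − y)|u(y) − u(x)|^p dy dx / ∫_{Γ_r} |u(x)|^p dx : u ∈ L^p(Ω_r ∪ Γ_r), ∫_{Γ_r} u = 0, ∫_{Γ_r} |u|^p > 0 } is strictly positive. -/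
/-!
Since `u` has mean zero on `Γ`, Jensen's inequality gives
`∫_Γ |u|^p ≤ |Γ|⁻¹ ∫_Γ ∫_Γ |u(x) - u(y)|^p`, so it suffices to bound the double integral of
`|u(x) - u(y)|^p` over `Ω̂ × Ω̂` by the nonlocal energy. Where `|x - y| < R/2` the kernel is
bounded below by a positive constant, which handles pairs of balls of radius `R/6` with nearby
centres. Averaging `|u(x) - u(z)|^p ≤ 2^(p-1) (|u(x) - u(y)|^p + |u(y) - u(z)|^p)` over `y` in a
ball of positive measure makes this control transitive, so by connectedness it holds for any two
balls centred in `Ω̂`, and finitely many of them cover the bounded set `Ω̂`. For `u ∈ Lᵖ` the energy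
is finite, which allows passing back to real-valued integrals.
-/

open MeasureTheory Set Metric
open scoped ENNReal

noncomputable section

namespace NonlocalPoincare

section Energy

variable {α : Type*} [MeasurableSpace α] (μ : Measure α) (p : ℝ)

def crossEnergy (v : α → ℝ) (s t : Set α) : ℝ≥0∞ :=
  ∫⁻ x in s, ∫⁻ y in t, edist (v x) (v y) ^ p ∂μ ∂μ

def kernelEnergy (K : α → α → ℝ) (D : Set α) (v : α → ℝ) : ℝ≥0∞ :=
  ∫⁻ x in D, ∫⁻ y in D, ENNReal.ofReal (K x y) * edist (v x) (v y) ^ p ∂μ ∂μ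

def CrossEnergyDominated (K : α → α → ℝ) (D s t : Set α) : Prop :=
  ∃ C : ℝ≥0∞, C ≠ ∞ ∧ ∀ v : α → ℝ, Measurable v →
    crossEnergy μ p v s t ≤ C * kernelEnergy μ p K D v

variable {μ p}

lemma measurable_edist_rpow {v : α → ℝ} (hv : Measurable v) :
    Measurable fun z : α × α => edist (v z.1) (v z.2) ^ p :=
  ((hv.comp measurable_fst).edist (hv.comp measurable_snd)).pow_const p

lemma crossEnergy_mono {v : α → ℝ} {s s' t t' : Set α} (hs : s ⊆ s') (ht : t ⊆ t') :
    crossEnergy μ p v s t ≤ crossEnergy μ p v s' t' :=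
  (lintegral_mono fun _ => lintegral_mono_set ht).trans (lintegral_mono_set hs)

lemma crossEnergyDominated_of_le_kernel {K : α → α → ℝ} {D s t : Set α} {c : ℝ} (hc : 0 < c)
    (hsD : s ⊆ D) (htD : t ⊆ D) (hs : MeasurableSet s) (ht : MeasurableSet t)
    (hK : ∀ x ∈ s, ∀ y ∈ t, c ≤ K x y) : CrossEnergyDominated μ p K D s t := by
  have hc₀ : ENNReal.ofReal c ≠ 0 := (ENNReal.ofReal_pos.2 hc).ne'
  refine ⟨(ENNReal.ofReal c)⁻¹, ENNReal.inv_ne_top.2 hc₀, fun v _ => ?_⟩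
  rw [← ENNReal.mul_le_iff_le_inv hc₀ ENNReal.ofReal_ne_top, crossEnergy,
    ← lintegral_const_mul' _ _ ENNReal.ofReal_ne_top]
  calc ∫⁻ x in s, ENNReal.ofReal c * ∫⁻ y in t, edist (v x) (v y) ^ p ∂μ ∂μ
      ≤ ∫⁻ x in s, ∫⁻ y in t, ENNReal.ofReal (K x y) * edist (v x) (v y) ^ p ∂μ ∂μ := by
        refine setLIntegral_mono' hs fun x hx => ?_
        rw [← lintegral_const_mul' _ _ ENNReal.ofReal_ne_top]
        exact setLIntegral_mono' ht fun y hy => by gcongr; exact hK x hx y hy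
    _ ≤ kernelEnergy μ p K D v :=
        (lintegral_mono fun _ => lintegral_mono_set htD).trans (lintegral_mono_set hsD)

lemma edist_rpow_le {E : Type*} [PseudoEMetricSpace E] (hp : 1 ≤ p) (a b c : E) :
    edist a b ^ p ≤ 2 ^ (p - 1) * (edist a c ^ p + edist c b ^ p) :=
  (ENNReal.rpow_le_rpow (edist_triangle a c b) (by linarith)).trans
    (ENNReal.rpow_add_le_mul_rpow_add_rpow _ _ hp)

lemma measure_mul_crossEnergy_le [SFinite μ] (hp : 1 ≤ p) {v : α → ℝ} (hv : Measurable v)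
    (s t W : Set α) :
    μ W * crossEnergy μ p v s t ≤
      2 ^ (p - 1) * (μ t * crossEnergy μ p v s W + μ s * crossEnergy μ p v W t) := by
  have hG := measurable_edist_rpow (p := p) hv
  have hG₁ : ∀ x, Measurable fun y => edist (v x) (v y) ^ p := fun x => by fun_prop
  have h2 : (2 : ℝ≥0∞) ^ (p - 1) ≠ ∞ := ENNReal.rpow_ne_top_of_nonneg (by linarith) (by simp)
  set A : α → ℝ≥0∞ := fun x => ∫⁻ z in W, edist (v x) (v z) ^ p ∂μ
  set B : α → ℝ≥0∞ := fun y => ∫⁻ z in W, edist (v z) (v y) ^ p ∂μ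
  have hA : Measurable A := hG.lintegral_prod_right'
  have hpt : ∀ x y, μ W * edist (v x) (v y) ^ p ≤ 2 ^ (p - 1) * (A x + B y) := fun x y =>
    calc μ W * edist (v x) (v y) ^ p = ∫⁻ _ in W, edist (v x) (v y) ^ p ∂μ := by
          rw [setLIntegral_const, mul_comm]
      _ ≤ ∫⁻ z in W, 2 ^ (p - 1) * (edist (v x) (v z) ^ p + edist (v z) (v y) ^ p) ∂μ :=
          lintegral_mono fun z => edist_rpow_le hp _ _ _
      _ = 2 ^ (p - 1) * (A x + B y) := by
          rw [lintegral_const_mul' _ _ h2, lintegral_add_left (hG₁ x)]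
  have hBt : ∫⁻ y in t, B y ∂μ = crossEnergy μ p v W t :=
    lintegral_lintegral_swap (hG.comp measurable_swap).aemeasurable
  calc μ W * crossEnergy μ p v s t
      = ∫⁻ x in s, ∫⁻ y in t, μ W * edist (v x) (v y) ^ p ∂μ ∂μ := by
        rw [crossEnergy, ← lintegral_const_mul _ (hG.lintegral_prod_right' (ν := μ.restrict t))]
        exact lintegral_congr fun x => (lintegral_const_mul _ (hG₁ x)).symm
    _ ≤ ∫⁻ x in s, ∫⁻ y in t, 2 ^ (p - 1) * (A x + B y) ∂μ ∂μ :=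
        lintegral_mono fun x => lintegral_mono fun y => hpt x y
    _ = ∫⁻ x in s, 2 ^ (p - 1) * (A x * μ t + crossEnergy μ p v W t) ∂μ := by
        refine lintegral_congr fun x => ?_
        rw [lintegral_const_mul' _ _ h2, lintegral_add_left measurable_const, setLIntegral_const,
          hBt]
    _ = 2 ^ (p - 1) * (μ t * crossEnergy μ p v s W + μ s * crossEnergy μ p v W t) := by
        rw [lintegral_const_mul' _ _ h2, lintegral_add_right _ measurable_const,
          lintegral_mul_const _ hA, setLIntegral_const, mul_comm _ (μ t), mul_comm _ (μ s)]
        rfl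

lemma CrossEnergyDominated.trans [SFinite μ] (hp : 1 ≤ p) {K : α → α → ℝ} {D s t W : Set α}
    (hW₀ : μ W ≠ 0) (hW : μ W ≠ ∞) (hs : μ s ≠ ∞) (ht : μ t ≠ ∞)
    (h₁ : CrossEnergyDominated μ p K D s W) (h₂ : CrossEnergyDominated μ p K D W t) :
    CrossEnergyDominated μ p K D s t := by
  obtain ⟨C₁, hC₁, h₁⟩ := h₁
  obtain ⟨C₂, hC₂, h₂⟩ := h₂
  have h2 : (2 : ℝ≥0∞) ^ (p - 1) ≠ ∞ := ENNReal.rpow_ne_top_of_nonneg (by linarith) (by simp)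
  refine ⟨(μ W)⁻¹ * (2 ^ (p - 1) * (μ t * C₁ + μ s * C₂)), by finiteness, fun v hv => ?_⟩
  rw [mul_assoc, ← ENNReal.mul_le_iff_le_inv hW₀ hW]
  calc μ W * crossEnergy μ p v s t
      ≤ 2 ^ (p - 1) * (μ t * crossEnergy μ p v s W + μ s * crossEnergy μ p v W t) :=
        measure_mul_crossEnergy_le hp hv s t W
    _ ≤ 2 ^ (p - 1) * (μ t * (C₁ * kernelEnergy μ p K D v) +
          μ s * (C₂ * kernelEnergy μ p K D v)) := by
        gcongr
        exacts [h₁ v hv, h₂ v hv]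
    _ = 2 ^ (p - 1) * (μ t * C₁ + μ s * C₂) * kernelEnergy μ p K D v := by ring

lemma crossEnergy_le_sum_of_subset_iUnion [SFinite μ] {ι : Type*} [Fintype ι] {v : α → ℝ}
    (hv : Measurable v) {A : ι → Set α} {s t : Set α} (hs : s ⊆ ⋃ i, A i) (ht : t ⊆ ⋃ i, A i) :
    crossEnergy μ p v s t ≤ ∑ i, ∑ j, crossEnergy μ p v (A i) (A j) :=
  calc crossEnergy μ p v s t
      ≤ ∫⁻ x in ⋃ i, A i, ∑ j, ∫⁻ y in A j, edist (v x) (v y) ^ p ∂μ ∂μ := by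
        refine (lintegral_mono fun x => (lintegral_mono_set ht).trans ?_).trans
          (lintegral_mono_set hs)
        exact (lintegral_iUnion_le _ _).trans_eq (tsum_fintype _)
    _ ≤ ∑ i, ∫⁻ x in A i, ∑ j, ∫⁻ y in A j, edist (v x) (v y) ^ p ∂μ ∂μ :=
        (lintegral_iUnion_le _ _).trans_eq (tsum_fintype _)
    _ = ∑ i, ∑ j, crossEnergy μ p v (A i) (A j) :=
        Finset.sum_congr rfl fun i _ => lintegral_finsetSum _ fun j _ =>
          (measurable_edist_rpow hv).lintegral_prod_right'

lemma CrossEnergyDominated.of_subset_iUnion [SFinite μ] {ι : Type*} [Finite ι]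
    {K : α → α → ℝ} {D : Set α} {A : ι → Set α}
    (h : ∀ i j, CrossEnergyDominated μ p K D (A i) (A j))
    {s t : Set α} (hs : s ⊆ ⋃ i, A i) (ht : t ⊆ ⋃ i, A i) :
    CrossEnergyDominated μ p K D s t := by
  cases nonempty_fintype ι
  choose C hC hdom using h
  refine ⟨∑ i, ∑ j, C i j, ENNReal.sum_ne_top.2 fun i _ => ENNReal.sum_ne_top.2 fun j _ => hC i j,
    fun v hv => ?_⟩
  calc crossEnergy μ p v s t ≤ ∑ i, ∑ j, crossEnergy μ p v (A i) (A j) :=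
        crossEnergy_le_sum_of_subset_iUnion hv hs ht
    _ ≤ ∑ i, ∑ j, C i j * kernelEnergy μ p K D v := by gcongr with i _ j _; exact hdom i j v hv
    _ = (∑ i, ∑ j, C i j) * kernelEnergy μ p K D v := by simp only [Finset.sum_mul]

lemma enorm_rpow_le_inv_mul_lintegral_edist_rpow (hp : 1 ≤ p) {v : α → ℝ} {Γ : Set α}
    (hΓ₀ : μ Γ ≠ 0) (hΓ : μ Γ ≠ ∞) (hv : Integrable v (μ.restrict Γ))
    (hmean : ∫ y in Γ, v y ∂μ = 0) (x : α) :
    ‖v x‖ₑ ^ p ≤ (μ Γ)⁻¹ * ∫⁻ y in Γ, edist (v x) (v y) ^ p ∂μ := by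
  set κ := (μ Γ)⁻¹ • μ.restrict Γ
  have : IsProbabilityMeasure κ := ProbabilityTheory.cond_isProbabilityMeasure_of_finite hΓ₀ hΓ
  have hvκ : Integrable v κ := hv.smul_measure (ENNReal.inv_ne_top.2 hΓ₀)
  have hmean' : ∫ y, v x - v y ∂κ = v x := by
    rw [integral_sub (integrable_const _) hvκ, integral_const, integral_smul_measure, hmean]
    simp
  have hp₀ : ENNReal.ofReal p ≠ 0 := (ENNReal.ofReal_pos.2 (by linarith)).ne'
  calc ‖v x‖ₑ ^ p ≤ eLpNorm (fun y => v x - v y) (ENNReal.ofReal p) κ ^ p := by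
        gcongr
        calc ‖v x‖ₑ = ‖∫ y, v x - v y ∂κ‖ₑ := by rw [hmean']
          _ ≤ ∫⁻ y, ‖v x - v y‖ₑ ∂κ := enorm_integral_le_lintegral_enorm _
          _ = eLpNorm (fun y => v x - v y) 1 κ := eLpNorm_one_eq_lintegral_enorm.symm
          _ ≤ _ := eLpNorm_le_eLpNorm_of_exponent_le (by simpa using hp)
            ((integrable_const _).sub hvκ).aestronglyMeasurable
    _ = ∫⁻ y, edist (v x) (v y) ^ p ∂κ := by
        rw [eLpNorm_eq_eLpNorm' hp₀ ENNReal.ofReal_ne_top, ENNReal.toReal_ofReal (by linarith),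
          ← lintegral_rpow_enorm_eq_rpow_eLpNorm' (by linarith)]
        simp only [edist_eq_enorm_sub]
    _ = (μ Γ)⁻¹ * ∫⁻ y in Γ, edist (v x) (v y) ^ p ∂μ := by
        rw [lintegral_smul_measure, smul_eq_mul]

lemma lintegral_enorm_rpow_le_crossEnergy (hp : 1 ≤ p) {v : α → ℝ} {Γ : Set α}
    (hΓ₀ : μ Γ ≠ 0) (hΓ : μ Γ ≠ ∞) (hv : Integrable v (μ.restrict Γ))
    (hmean : ∫ y in Γ, v y ∂μ = 0) :
    ∫⁻ x in Γ, ‖v x‖ₑ ^ p ∂μ ≤ (μ Γ)⁻¹ * crossEnergy μ p v Γ Γ :=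
  (lintegral_mono fun x => enorm_rpow_le_inv_mul_lintegral_edist_rpow hp hΓ₀ hΓ hv hmean x).trans_eq
    (lintegral_const_mul' _ _ (ENNReal.inv_ne_top.2 hΓ₀))

lemma kernelEnergy_ne_top (hp : 1 ≤ p) {K : α → α → ℝ} {M : ℝ} (hKM : ∀ x y, K x y ≤ M)
    {D : Set α} (hD : μ D ≠ ∞) {v : α → ℝ}
    (hvD : MemLp v (ENNReal.ofReal p) (μ.restrict D)) : kernelEnergy μ p K D v ≠ ∞ := by
  set a : α → ℝ≥0∞ := fun x => ‖v x‖ₑ ^ p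
  set c : ℝ≥0∞ := ENNReal.ofReal M * 2 ^ (p - 1)
  have hc : c ≠ ∞ := ENNReal.mul_ne_top ENNReal.ofReal_ne_top
    (ENNReal.rpow_ne_top_of_nonneg (by linarith) (by simp))
  have hI : ∫⁻ x in D, a x ∂μ ≠ ∞ := by
    have h := lintegral_rpow_enorm_lt_top_of_eLpNorm_lt_top
      (ENNReal.ofReal_pos.2 (by linarith)).ne' ENNReal.ofReal_ne_top hvD.2
    rw [ENNReal.toReal_ofReal (by linarith)] at h
    exact h.ne
  have hpt : ∀ x y, ENNReal.ofReal (K x y) * edist (v x) (v y) ^ p ≤ c * (a x + a y) := by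
    intro x y
    rw [mul_assoc]
    gcongr
    · exact hKM x y
    · refine (ENNReal.rpow_le_rpow ?_ (by linarith)).trans
        (ENNReal.rpow_add_le_mul_rpow_add_rpow _ _ hp)
      exact (edist_eq_enorm_sub _ _).trans_le enorm_sub_le
  refine ne_top_of_le_ne_top ?_ (lintegral_mono fun x => lintegral_mono fun y => hpt x y)
  simp_rw [lintegral_const_mul' _ _ hc, lintegral_add_left measurable_const, setLIntegral_const]
  rw [lintegral_add_right _ measurable_const, lintegral_mul_const' _ _ hD, setLIntegral_const]
  finiteness

lemma integral_abs_rpow_eq_toReal_lintegral (hp : 0 ≤ p) {f : α → ℝ}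
    (hf : AEStronglyMeasurable f μ) :
    ∫ x, |f x| ^ p ∂μ = (∫⁻ x, ‖f x‖ₑ ^ p ∂μ).toReal := by
  rw [integral_eq_lintegral_of_nonneg_ae (.of_forall fun x => by positivity)
    (by fun_prop)]
  simp_rw [Real.enorm_eq_ofReal_abs, ENNReal.ofReal_rpow_of_nonneg (abs_nonneg _) hp]

lemma integral_kernel_mul_eq_toReal_kernelEnergy [SFinite μ] (hp : 0 ≤ p) {K : α → α → ℝ}
    (hK : Measurable (Function.uncurry K)) (hK₀ : ∀ x y, 0 ≤ K x y) {v : α → ℝ}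
    (hv : Measurable v) (D : Set α) :
    ∫ z in D ×ˢ D, K z.1 z.2 * |v z.2 - v z.1| ^ p ∂μ.prod μ =
      (kernelEnergy μ p K D v).toReal := by
  have hF : Measurable fun z : α × α => K z.1 z.2 * |v z.2 - v z.1| ^ p := by
    have : Measurable fun z : α × α => K z.1 z.2 := hK
    fun_prop
  rw [← Measure.prod_restrict, integral_eq_lintegral_of_nonneg_ae
    (.of_forall fun z => mul_nonneg (hK₀ _ _) (by positivity)) hF.aestronglyMeasurable,
    lintegral_prod _ hF.ennreal_ofReal.aemeasurable, kernelEnergy]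
  refine congrArg ENNReal.toReal (lintegral_congr fun x => lintegral_congr fun y => ?_)
  rw [ENNReal.ofReal_mul (hK₀ _ _), edist_dist, Real.dist_eq, abs_sub_comm,
    ENNReal.ofReal_rpow_of_nonneg (abs_nonneg _) hp]

lemma integral_kernel_congr_ae [SFinite μ] {K : α → α → ℝ} {D : Set α} {u v : α → ℝ}
    (huv : u =ᵐ[μ.restrict D] v) :
    ∫ z in D ×ˢ D, K z.1 z.2 * |u z.2 - u z.1| ^ p ∂μ.prod μ =
      ∫ z in D ×ˢ D, K z.1 z.2 * |v z.2 - v z.1| ^ p ∂μ.prod μ := by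
  refine integral_congr_ae ?_
  rw [← Measure.prod_restrict]
  filter_upwards [Measure.quasiMeasurePreserving_fst.ae_eq_comp huv,
    Measure.quasiMeasurePreserving_snd.ae_eq_comp huv] with z h₁ h₂
  simp only [Function.comp_apply] at h₁ h₂
  rw [h₁, h₂]

theorem exists_setIntegral_rpow_le_mul_integral_kernel [SFinite μ] (hp : 1 ≤ p)
    {K : α → α → ℝ} {M : ℝ} (hK : Measurable (Function.uncurry K)) (hK₀ : ∀ x y, 0 ≤ K x y)
    (hKM : ∀ x y, K x y ≤ M) {D Γ : Set α} (hΓD : Γ ⊆ D) (hΓ₀ : μ Γ ≠ 0) (hD : μ D ≠ ∞)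
    (hdom : CrossEnergyDominated μ p K D D D) :
    ∃ A > 0, ∀ u : α → ℝ, MemLp u (ENNReal.ofReal p) (μ.restrict D) →
      ∫ x in Γ, u x ∂μ = 0 →
      ∫ x in Γ, |u x| ^ p ∂μ ≤ A * ∫ z in D ×ˢ D, K z.1 z.2 * |u z.2 - u z.1| ^ p ∂μ.prod μ := by
  obtain ⟨C, hC, hCdom⟩ := hdom
  have hΓ : μ Γ ≠ ∞ := ne_top_of_le_ne_top hD (measure_mono hΓD)
  refine ⟨((μ Γ)⁻¹ * C).toReal + 1, by positivity, fun u hu hmean => ?_⟩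
  set v := hu.1.aemeasurable.mk u
  have hv : Measurable v := hu.1.aemeasurable.measurable_mk
  have huv : u =ᵐ[μ.restrict D] v := hu.1.aemeasurable.ae_eq_mk
  have huvΓ : u =ᵐ[μ.restrict Γ] v := ae_restrict_of_ae_restrict_of_subset hΓD huv
  have hvD : MemLp v (ENNReal.ofReal p) (μ.restrict D) := hu.ae_eq huv
  have : IsFiniteMeasure (μ.restrict Γ) := isFiniteMeasure_restrict.2 hΓ
  have hvΓ : Integrable v (μ.restrict Γ) :=
    ((hvD.mono_measure (Measure.restrict_mono hΓD le_rfl)).integrable (by simpa using hp))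
  have hvmean : ∫ x in Γ, v x ∂μ = 0 := integral_congr_ae huvΓ ▸ hmean
  have hsingle : (fun x => |u x| ^ p) =ᵐ[μ.restrict Γ] fun x => |v x| ^ p :=
    huvΓ.fun_comp fun t => |t| ^ p
  rw [integral_congr_ae hsingle, integral_kernel_congr_ae huv,
    integral_abs_rpow_eq_toReal_lintegral (by linarith) hv.aestronglyMeasurable,
    integral_kernel_mul_eq_toReal_kernelEnergy (by linarith) hK hK₀ hv]
  have hL : ∫⁻ x in Γ, ‖v x‖ₑ ^ p ∂μ ≤ (μ Γ)⁻¹ * C * kernelEnergy μ p K D v :=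
    calc ∫⁻ x in Γ, ‖v x‖ₑ ^ p ∂μ ≤ (μ Γ)⁻¹ * crossEnergy μ p v Γ Γ :=
          lintegral_enorm_rpow_le_crossEnergy hp hΓ₀ hΓ hvΓ hvmean
      _ ≤ (μ Γ)⁻¹ * (C * kernelEnergy μ p K D v) := by
          gcongr
          exact (crossEnergy_mono hΓD hΓD).trans (hCdom v hv)
      _ = (μ Γ)⁻¹ * C * kernelEnergy μ p K D v := (mul_assoc _ _ _).symm
  have hE := kernelEnergy_ne_top hp hKM hD hvD
  calc (∫⁻ x in Γ, ‖v x‖ₑ ^ p ∂μ).toReal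
      ≤ ((μ Γ)⁻¹ * C).toReal * (kernelEnergy μ p K D v).toReal := by
        rw [← ENNReal.toReal_mul]
        exact ENNReal.toReal_mono (by finiteness) hL
    _ ≤ (((μ Γ)⁻¹ * C).toReal + 1) * (kernelEnergy μ p K D v).toReal := by gcongr; linarith

end Energy

section Metric

variable {α : Type*} [MetricSpace α] [ProperSpace α] [MeasurableSpace α] [OpensMeasurableSpace α]
  {μ : Measure α} [SFinite μ] [μ.IsOpenPosMeasure] [IsFiniteMeasureOnCompacts μ] {p : ℝ}
  {K : α → α → ℝ} {D : Set α} {δ c : ℝ}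

lemma crossEnergyDominated_ball_inter (hp : 1 ≤ p) (hDo : IsOpen D) (hDc : IsPreconnected D)
    (hδ : 0 < δ) (hc : 0 < c) (hK : ∀ x y, dist x y < 3 * δ → c ≤ K x y) {x y : α}
    (hx : x ∈ D) (hy : y ∈ D) :
    CrossEnergyDominated μ p K D (ball x δ ∩ D) (ball y δ ∩ D) := by
  have hB : ∀ z, MeasurableSet (ball z δ ∩ D) := fun z => measurableSet_ball.inter hDo.measurableSet
  have hBμ : ∀ z, μ (ball z δ ∩ D) ≠ ∞ := fun z =>
    (isBounded_ball.subset inter_subset_left).measure_lt_top.ne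
  have near : ∀ a b, dist a b < δ → CrossEnergyDominated μ p K D (ball a δ ∩ D) (ball b δ ∩ D) :=
    fun a b hab => crossEnergyDominated_of_le_kernel hc inter_subset_right inter_subset_right
      (hB a) (hB b) fun x hx y hy => hK x y <|
        calc dist x y ≤ dist x a + dist a b + dist b y := dist_triangle4 _ _ _ _
          _ < δ + δ + δ := by
            gcongr
            exacts [hx.1, mem_ball'.1 hy.1]
          _ = 3 * δ := by ring
  refine hDc.induction₂' (fun a b => CrossEnergyDominated μ p K D (ball a δ ∩ D) (ball b δ ∩ D))
    (fun a _ => ?_) (fun a b z _ hb _ h₁ h₂ => ?_) hx hy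
  · filter_upwards [nhdsWithin_le_nhds (ball_mem_nhds a hδ)] with b hb
    exact ⟨near a b (mem_ball'.1 hb), near b a hb⟩
  · exact h₁.trans hp ((isOpen_ball.inter hDo).measure_ne_zero μ ⟨b, mem_ball_self hδ, hb⟩)
      (hBμ b) (hBμ a) (hBμ z) h₂

lemma crossEnergyDominated_self (hp : 1 ≤ p) (hDo : IsOpen D) (hDc : IsPreconnected D)
    (hDb : Bornology.IsBounded D) (hδ : 0 < δ) (hc : 0 < c)
    (hK : ∀ x y, dist x y < 3 * δ → c ≤ K x y) : CrossEnergyDominated μ p K D D D := by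
  obtain ⟨F, hFD, hF, hDF⟩ := finite_approx_of_totallyBounded
    (hDb.isCompact_closure.totallyBounded.subset subset_closure) δ hδ
  have : Finite F := hF.to_subtype
  have hcover : D ⊆ ⋃ q : F, ball (q : α) δ ∩ D := fun x hx => by
    obtain ⟨q, hq, hxq⟩ := mem_iUnion₂.1 (hDF hx)
    exact mem_iUnion.2 ⟨⟨q, hq⟩, hxq, hx⟩
  exact .of_subset_iUnion (fun i j => crossEnergyDominated_ball_inter hp hDo hDc hδ hc hK
    (hFD i.2) (hFD j.2)) hcover hcover

end Metric

lemma measure_boundaryLayer_ne_zero {α : Type*} [MetricSpace α] [MeasurableSpace α]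
    (μ : Measure α) [μ.IsOpenPosMeasure] {D : Set α} (hDo : IsOpen D)
    (hD : (frontier D).Nonempty) {r : ℝ} (hr : 0 < r) :
    μ {x ∈ D | infDist x (frontier D) ≤ r} ≠ 0 := by
  obtain ⟨y, hy⟩ := hD
  obtain ⟨x, hxD, hxy⟩ := Metric.mem_closure_iff.1 (frontier_subset_closure hy) r hr
  have hV : IsOpen {x ∈ D | infDist x (frontier D) < r} :=
    hDo.inter (isOpen_lt (continuous_infDist_pt _) continuous_const)
  have hxV : infDist x (frontier D) < r :=
    (infDist_le_dist_of_mem hy).trans_lt (dist_comm y x ▸ hxy)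
  have hVne : ({x ∈ D | infDist x (frontier D) < r} : Set α).Nonempty := ⟨x, hxD, hxV⟩
  have hVsub : {x ∈ D | infDist x (frontier D) < r} ⊆ {x ∈ D | infDist x (frontier D) ≤ r} :=
    fun z hz => ⟨hz.1, hz.2.le⟩
  exact fun h => hV.measure_ne_zero μ hVne (measure_mono_null hVsub h)

end NonlocalPoincare

open NonlocalPoincare

theorem poincare_constant_positive_full_general
    (n : ℕ) (hn : 1 ≤ n)
    (Ωhat : Set (EuclideanSpace ℝ (Fin n)))
    (hΩopen : IsOpen Ωhat) (hΩconn : IsConnected Ωhat)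
    (hΩbdd : Bornology.IsBounded Ωhat)
    (R : ℝ) (hR : 0 < R)
    (J : EuclideanSpace ℝ (Fin n) → ℝ)
    (hJcont : Continuous J) (hJnonneg : ∀ x, 0 ≤ J x)
    (hJdecr : ∀ x y, ‖x‖ ≤ ‖y‖ → J y ≤ J x)
    (hJpos : ∀ x, ‖x‖ < R → 0 < J x)
    (r : ℝ) (hr0 : 0 < r)
    (Γ Ω : Set (EuclideanSpace ℝ (Fin n)))
    (hΓ : Γ = {x ∈ Ωhat | Metric.infDist x (frontier Ωhat) ≤ r})
    (hΩ : Ω = Ωhat \ Γ)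
    (p : ℝ) (hp1 : 1 ≤ p) :
    ∃ β : ℝ, 0 < β ∧
      ∀ u : EuclideanSpace ℝ (Fin n) → ℝ,
        MemLp u (ENNReal.ofReal p) (volume.restrict (Ω ∪ Γ)) →
        (∫ x in Γ, u x) = 0 →
        β * ∫ x in Γ, |u x| ^ p ≤
          (1 / 2) * ∫ z in (Ω ∪ Γ) ×ˢ (Ω ∪ Γ),
            J (z.1 - z.2) * |u z.2 - u z.1| ^ p := by
  have hΓD : Γ ⊆ Ωhat := hΓ ▸ fun x hx => hx.1
  have hunion : Ω ∪ Γ = Ωhat := hΩ ▸ sdiff_union_of_subset hΓD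
  have : Nonempty (Fin n) := ⟨⟨0, hn⟩⟩
  have hfrontier : (frontier Ωhat).Nonempty := nonempty_frontier_iff.2
    ⟨hΩconn.nonempty, fun h => NormedSpace.unbounded_univ ℝ _ (h ▸ hΩbdd)⟩
  have hΓ₀ : volume Γ ≠ 0 := hΓ ▸ measure_boundaryLayer_ne_zero volume hΩopen hfrontier hr0
  obtain ⟨w, hw⟩ := exists_norm_eq (EuclideanSpace ℝ (Fin n)) (by positivity : 0 ≤ R / 2)
  have hdom : CrossEnergyDominated volume p (fun x y => J (x - y)) Ωhat Ωhat Ωhat :=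
    crossEnergyDominated_self hp1 hΩopen hΩconn.isPreconnected hΩbdd (by positivity : 0 < R / 6)
      (hJpos w (by linarith)) fun x y hxy => hJdecr _ _ (by rw [hw, ← dist_eq_norm]; linarith)
  obtain ⟨A, hA, hpoincare⟩ := exists_setIntegral_rpow_le_mul_integral_kernel hp1
    (K := fun x y => J (x - y))
    (hJcont.measurable.comp (measurable_fst.sub measurable_snd)) (fun _ _ => hJnonneg _)
    (fun x y => hJdecr 0 (x - y) (by simp)) hΓD hΓ₀ hΩbdd.measure_lt_top.ne hdom
  refine ⟨(2 * A)⁻¹, by positivity, fun u hu hmean => ?_⟩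
  rw [hunion] at hu ⊢
  calc (2 * A)⁻¹ * ∫ x in Γ, |u x| ^ p
      ≤ (2 * A)⁻¹ * (A * ∫ z in Ωhat ×ˢ Ωhat, J (z.1 - z.2) * |u z.2 - u z.1| ^ p) := by
        gcongr
        exact hpoincare u hu hmean
    _ = _ := by field_simp

/-- the Poincaré-type constant with the full double integral over
`(Ω_r ∪ Γ_r) × (Ω_r ∪ Γ_r)` is strictly positive for every `0 < r ≤ R`. -/
theorem poincare_constant_positive_full
    (n : ℕ) (hn : 1 ≤ n)
    (Ωhat : Set (EuclideanSpace ℝ (Fin n)))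
    (hΩopen : IsOpen Ωhat) (hΩconn : IsConnected Ωhat)
    (hΩbdd : Bornology.IsBounded Ωhat)
    (R : ℝ) (hR : 0 < R)
    (J : EuclideanSpace ℝ (Fin n) → ℝ)
    (hJcont : Continuous J) (hJnonneg : ∀ x, 0 ≤ J x)
    (hJradial : ∀ x y, ‖x‖ = ‖y‖ → J x = J y)
    (hJdecr : ∀ x y, ‖x‖ ≤ ‖y‖ → J y ≤ J x)
    (hJpos : ∀ x, ‖x‖ < R → 0 < J x)
    (hJzero : ∀ x, R ≤ ‖x‖ → J x = 0)
    (hJint : ∫ w, J w = 1)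
    (r : ℝ) (hr0 : 0 < r) (hrR : r ≤ R)
    (Γ Ω : Set (EuclideanSpace ℝ (Fin n)))
    (hΓ : Γ = {x ∈ Ωhat | Metric.infDist x (frontier Ωhat) ≤ r})
    (hΩ : Ω = Ωhat \ Γ)
    (hΩint : (interior Ω).Nonempty)
    (p : ℝ) (hp1 : 1 ≤ p) :
    ∃ β : ℝ, 0 < β ∧
      ∀ u : EuclideanSpace ℝ (Fin n) → ℝ,
        MemLp u (ENNReal.ofReal p) (volume.restrict (Ω ∪ Γ)) →
        (∫ x in Γ, u x) = 0 →
        β * ∫ x in Γ, |u x| ^ p ≤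
          (1 / 2) * ∫ z in (Ω ∪ Γ) ×ˢ (Ω ∪ Γ),
            J (z.1 - z.2) * |u z.2 - u z.1| ^ p :=
  poincare_constant_positive_full_general n hn Ωhat hΩopen hΩconn hΩbdd R hR J hJcont hJnonneg
    hJdecr hJpos r hr0 Γ Ω hΓ hΩ p hp1

end
end
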